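/- arXiv:2503.17854 — 2 statements merged into one kernel-verified Lean document; each statement's English description precedes it below -/
import Mathlib

section
/- In the Bar-Natan algebra 𝓑 (the path algebra over a field k of the quiver with two vertices •, ∘, loops D_•, D_∘, and arrows S_• : • → ∘, S_∘ : ∘ → •, modulo the relations D_∘S_• = S_•D_• = 0 and D_•S_∘ = S_∘D_∘ = 0), the element H := S_∘S_• − D_• + S_•S_∘ − D_∘ is central. -/
/- The Bar-Natan algebra 𝓑: path algebra over k of the quiver with two vertices
•, ∘ (idempotents eb, ec), loops Db, Dc, arrows Sb : • → ∘ and Sc : ∘ → •,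
modulo D_∘S_• = S_•D_• = 0 and D_•S_∘ = S_∘D_∘ = 0.  Paths compose
right-to-left, so the product x * y is "path y followed by path x". -/

inductive BNGen : Type
  | eb | ec | Db | Dc | Sb | Sc

variable (k : Type) [Field k]

noncomputable def bn (x : BNGen) : FreeAlgebra k BNGen := FreeAlgebra.ι k x

inductive BNRel : FreeAlgebra k BNGen → FreeAlgebra k BNGen → Prop
  | idem_b : BNRel (bn k .eb * bn k .eb) (bn k .eb)
  | idem_c : BNRel (bn k .ec * bn k .ec) (bn k .ec)
  | orth_bc : BNRel (bn k .eb * bn k .ec) 0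
  | orth_cb : BNRel (bn k .ec * bn k .eb) 0
  | sum : BNRel (bn k .eb + bn k .ec) 1
  | Sb_src : BNRel (bn k .Sb * bn k .eb) (bn k .Sb)
  | Sb_tgt : BNRel (bn k .ec * bn k .Sb) (bn k .Sb)
  | Sc_src : BNRel (bn k .Sc * bn k .ec) (bn k .Sc)
  | Sc_tgt : BNRel (bn k .eb * bn k .Sc) (bn k .Sc)
  | Db_src : BNRel (bn k .Db * bn k .eb) (bn k .Db)
  | Db_tgt : BNRel (bn k .eb * bn k .Db) (bn k .Db)
  | Dc_src : BNRel (bn k .Dc * bn k .ec) (bn k .Dc)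
  | Dc_tgt : BNRel (bn k .ec * bn k .Dc) (bn k .Dc)
  | DcSb : BNRel (bn k .Dc * bn k .Sb) 0
  | SbDb : BNRel (bn k .Sb * bn k .Db) 0
  | DbSc : BNRel (bn k .Db * bn k .Sc) 0
  | ScDc : BNRel (bn k .Sc * bn k .Dc) 0

/-- The quotient map onto the Bar-Natan algebra 𝓑 = RingQuot (BNRel k). -/
noncomputable def bnπ : FreeAlgebra k BNGen →ₐ[k] RingQuot (BNRel k) :=
  RingQuot.mkAlgHom k (BNRel k)

/-- H = S_∘S_• − D_• + S_•S_∘ − D_∘ (here S_∘S_• is the path S_• followed by S_∘,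
which in our multiplication convention is `Sc * Sb`). -/
noncomputable def BNH : RingQuot (BNRel k) :=
  bnπ k (bn k .Sc * bn k .Sb) - bnπ k (bn k .Db)
    + bnπ k (bn k .Sb * bn k .Sc) - bnπ k (bn k .Dc)

/-!
Each summand of `H` is a cycle: `S_∘S_•` and `D_•` at `•`, `S_•S_∘` and `D_∘` at `∘`. Hence
multiplying `H` by an idempotent just selects the cycles at that vertex, while for an arrow
the relations `D S = S D = 0` kill the loop terms on both sides:
`H S_• = S_•S_∘S_• = S_• H`, `H S_∘ = S_∘S_•S_∘ = S_∘ H`, `H D_• = -D_•² = D_• H` and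
`H D_∘ = -D_∘² = D_∘ H`. An element commuting with a generating set is central.
-/

theorem FreeAlgebra.commute_of_surjective_of_forall_commute_ι {R X A : Type*} [CommSemiring R]
    [Semiring A] [Algebra R A] (f : FreeAlgebra R X →ₐ[R] A) (hf : Function.Surjective f)
    {a : A} (ha : ∀ x, Commute a (f (ι R x))) (b : A) : Commute a b := by
  obtain ⟨y, rfl⟩ := hf b
  have hy : f y ∈ Algebra.adjoin R (Set.range (f ∘ ι R)) := by
    rw [Set.range_comp, Algebra.adjoin_image, adjoin_range_ι]
    exact ⟨y, trivial, rfl⟩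
  exact Algebra.commute_of_mem_adjoin_of_forall_mem_commute hy (by rintro _ ⟨x, rfl⟩; exact ha x)

inductive BNVertex : Type
  | black | white

-- `idem`, `src` and `tgt` are reducible so that `simp` can discharge side conditions such as
-- `g.src ≠ h.tgt`
abbrev BNVertex.idem : BNVertex → BNGen
  | black => .eb
  | white => .ec

abbrev BNGen.src : BNGen → BNVertex
  | eb | Db | Sb => .black
  | ec | Dc | Sc => .white

abbrev BNGen.tgt : BNGen → BNVertex
  | eb | Db | Sc => .black
  | ec | Dc | Sb => .white

namespace BarNatan

variable {k}

variable (k) in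
noncomputable def gen (g : BNGen) : RingQuot (BNRel k) := bnπ k (bn k g)

theorem bnπ_bn (g : BNGen) : bnπ k (bn k g) = gen k g := rfl

theorem gen_mul_gen_of_rel {g h : BNGen} {a : FreeAlgebra k BNGen}
    (hr : BNRel k (bn k g * bn k h) a) : gen k g * gen k h = bnπ k a := by
  rw [gen, gen, ← map_mul]
  exact RingQuot.mkAlgHom_rel k hr

theorem gen_mul_gen_eq_zero_of_rel {g h : BNGen} (hr : BNRel k (bn k g * bn k h) 0) :
    gen k g * gen k h = 0 :=
  (gen_mul_gen_of_rel hr).trans (map_zero _)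

theorem gen_idem_mul_gen_idem {v w : BNVertex} (hvw : v ≠ w) :
    gen k v.idem * gen k w.idem = 0 := by
  cases v <;> cases w
  all_goals first
    | exact absurd rfl hvw
    | exact gen_mul_gen_eq_zero_of_rel .orth_bc
    | exact gen_mul_gen_eq_zero_of_rel .orth_cb

theorem gen_mul_gen_idem_src (g : BNGen) : gen k g * gen k g.src.idem = gen k g := by
  cases g
  · exact gen_mul_gen_of_rel .idem_b
  · exact gen_mul_gen_of_rel .idem_c
  · exact gen_mul_gen_of_rel .Db_src
  · exact gen_mul_gen_of_rel .Dc_src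
  · exact gen_mul_gen_of_rel .Sb_src
  · exact gen_mul_gen_of_rel .Sc_src

theorem gen_idem_tgt_mul_gen (g : BNGen) : gen k g.tgt.idem * gen k g = gen k g := by
  cases g
  · exact gen_mul_gen_of_rel .idem_b
  · exact gen_mul_gen_of_rel .idem_c
  · exact gen_mul_gen_of_rel .Db_tgt
  · exact gen_mul_gen_of_rel .Dc_tgt
  · exact gen_mul_gen_of_rel .Sb_tgt
  · exact gen_mul_gen_of_rel .Sc_tgt

theorem gen_mul_gen_of_src_eq {g e : BNGen} (he : g.src.idem = e) : gen k g * gen k e = gen k g :=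
  he ▸ gen_mul_gen_idem_src g

theorem gen_mul_gen_of_tgt_eq {e g : BNGen} (he : g.tgt.idem = e) : gen k e * gen k g = gen k g :=
  he ▸ gen_idem_tgt_mul_gen g

theorem gen_mul_gen_of_src_ne_tgt {g h : BNGen} (hgh : g.src ≠ h.tgt) :
    gen k g * gen k h = 0 := by
  rw [← gen_mul_gen_idem_src g, ← gen_idem_tgt_mul_gen h, mul_assoc,
    ← mul_assoc (gen k g.src.idem), gen_idem_mul_gen_idem hgh, zero_mul, mul_zero]

theorem gen_Dc_mul_gen_Sb : gen k .Dc * gen k .Sb = 0 :=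
  gen_mul_gen_eq_zero_of_rel .DcSb

theorem gen_Sb_mul_gen_Db : gen k .Sb * gen k .Db = 0 :=
  gen_mul_gen_eq_zero_of_rel .SbDb

theorem gen_Db_mul_gen_Sc : gen k .Db * gen k .Sc = 0 :=
  gen_mul_gen_eq_zero_of_rel .DbSc

theorem gen_Sc_mul_gen_Dc : gen k .Sc * gen k .Dc = 0 :=
  gen_mul_gen_eq_zero_of_rel .ScDc

theorem commute_BNH_gen (g : BNGen) : Commute (BNH k) (gen k g) := by
  -- the relations rewrite products of two generators, so the products of three are
  -- normalized once under each bracketing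
  cases g <;>
    simp only [Commute, SemiconjBy, BNH, map_mul, bnπ_bn, mul_sub, sub_mul, mul_add, add_mul,
      mul_assoc, gen_mul_gen_of_src_eq, gen_mul_gen_of_tgt_eq, gen_Dc_mul_gen_Sb,
      gen_Sb_mul_gen_Db, gen_Db_mul_gen_Sc, gen_Sc_mul_gen_Dc] <;>
    simp [← mul_assoc, gen_mul_gen_of_tgt_eq, gen_mul_gen_of_src_ne_tgt, gen_Dc_mul_gen_Sb,
      gen_Db_mul_gen_Sc]

end BarNatan

theorem stmt3 (x : RingQuot (BNRel k)) : BNH k * x = x * BNH k :=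
  FreeAlgebra.commute_of_surjective_of_forall_commute_ι (bnπ k)
    (RingQuot.mkAlgHom_surjective k (BNRel k)) BarNatan.commute_BNH_gen x
end

section
/- Let R = k[H] and let C be the chain complex concentrated in homological degrees n, n+1, …, 0 (n < 0 even) with C_i = R for n ≤ i < 0 and C_0 = R², where the differential C_i → C_{i+1} is multiplication by H when i − n is odd, zero when i − n is even and i+1 < 0, and the map C_{−1} → C_0 is 1 ↦ (H, 1). Then the free part of the homology of C consists of exactly two copies of R, located in homological degrees n and 0. -/
/-!
Away from the ends the complex alternates `0` and `·H`. Where `d_j = 0` and `d_{j-1} = ·H`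
the homology is `R / H`, killed by `H`; where `d_j = ·H` it vanishes since `H` is a
non-zero-divisor.
At the ends, `d_n = 0` gives the tower `ker d_n = R`, and `(x, y) ↦ x - H y` identifies the
cokernel of `1 ↦ (H, 1)` with `R`.
-/

open Polynomial

namespace LinearMap

variable {R M N : Type*} [Ring R] [AddCommGroup M] [Module R M] [AddCommGroup N] [Module R N]

theorem range_prod_id_eq_ker (f : M →ₗ[R] N) :
    range (f.prod id) = ker (fst R N M - f ∘ₗ snd R N M) := by
  ext ⟨y, x⟩
  simp only [mem_range, prod_apply, id_coe, mem_ker, sub_apply, fst_apply,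
    coe_comp, Function.comp_apply, snd_apply, sub_eq_zero]
  constructor
  · rintro ⟨x, h⟩
    obtain ⟨rfl, rfl⟩ := Prod.mk.inj h
    rfl
  · rintro rfl
    exact ⟨x, rfl⟩

noncomputable def quotRangeProdIdEquiv (f : M →ₗ[R] N) :
    ((N × M) ⧸ range (f.prod id)) ≃ₗ[R] N :=
  (Submodule.quotEquivOfEq _ _ (range_prod_id_eq_ker f)).trans
    (quotKerEquivOfSurjective _ fun y => ⟨(y, 0), by simp⟩)

theorem ker_prod_id (f : M →ₗ[R] N) : ker (f.prod id) = ⊥ := by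
  rw [ker_prod, ker_id, inf_bot_eq]

end LinearMap

section Homology

variable {R M N : Type*} [Ring R] [AddCommGroup M] [Module R M] [AddCommGroup N] [Module R N]

theorem smul_homology_eq_zero_of_range_smul {K : Submodule R M} {g : M →ₗ[R] M} {a : R}
    (hg : ∀ m, g m = a • m) (x : K ⧸ (LinearMap.range g).comap K.subtype) : a • x = 0 := by
  obtain ⟨m, rfl⟩ := Submodule.Quotient.mk_surjective _ x
  rw [← Submodule.Quotient.mk_smul, Submodule.Quotient.mk_eq_zero]
  exact ⟨m, hg m⟩

theorem subsingleton_homology_of_injective {g : M →ₗ[R] N} {L : Submodule R (LinearMap.ker g)}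
    (hg : Function.Injective g) :
    Subsingleton (LinearMap.ker g ⧸ L) := by
  have : Subsingleton (LinearMap.ker g) := by
    rw [LinearMap.ker_eq_bot.mpr hg]
    infer_instance
  infer_instance

end Homology

theorem stmt7 (k : Type) [Field k] (n : ℤ) (hn : n < 0) (hne : Even n)
    (d : ℤ → (Polynomial k →ₗ[Polynomial k] Polynomial k))
    (dlast : Polynomial k →ₗ[Polynomial k] Polynomial k × Polynomial k)
    (hd0 : ∀ i, n ≤ i → i + 1 < 0 → Even (i - n) → d i = 0)
    (hdH : ∀ i, n ≤ i → i + 1 < 0 → Odd (i - n) → ∀ p, d i p = X * p)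
    (hdlast : ∀ p : Polynomial k, dlast p = (X * p, p)) :
    -- a free tower in homological degree n
    Nonempty ((LinearMap.ker (d n)) ≃ₗ[Polynomial k] Polynomial k) ∧
    -- a free tower in homological degree 0
    Nonempty (((Polynomial k × Polynomial k) ⧸ LinearMap.range dlast)
      ≃ₗ[Polynomial k] Polynomial k) ∧
    -- homology in intermediate degrees n < j < −1 is H-torsion
    (∀ j, n < j → j < -1 →
      ∀ x : (LinearMap.ker (d j)) ⧸
        (Submodule.comap (LinearMap.ker (d j)).subtype (LinearMap.range (d (j - 1)))),
        ∃ N : ℕ, (X : Polynomial k) ^ N • x = 0) ∧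
    -- homology in degree −1 vanishes
    LinearMap.ker dlast = ⊥ := by
  have hn1 : n + 1 < 0 := by obtain ⟨r, hr⟩ := hne; omega
  have hdn : d n = 0 := hd0 n le_rfl hn1 (by simp)
  have hdlast' : dlast = (LinearMap.mulLeft _ X).prod LinearMap.id := LinearMap.ext hdlast
  refine ⟨⟨LinearEquiv.ofTop _ (by rw [hdn, LinearMap.ker_zero])⟩,
    ⟨hdlast' ▸ LinearMap.quotRangeProdIdEquiv _⟩, fun j hnj hj x => ?_,
    hdlast' ▸ LinearMap.ker_prod_id _⟩
  rcases Int.even_or_odd (j - n) with ⟨r, hr⟩ | hodd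
  · have hprev : ∀ p, d (j - 1) p = X * p :=
      hdH (j - 1) (by omega) (by omega) ⟨r - 1, by omega⟩
    exact ⟨1, by rw [pow_one]; exact smul_homology_eq_zero_of_range_smul hprev x⟩
  · have hinj : Function.Injective (d j) := fun p q h => by
      rw [hdH j hnj.le (by omega) hodd, hdH j hnj.le (by omega) hodd] at h
      exact mul_left_cancel₀ X_ne_zero h
    exact ⟨0, (subsingleton_homology_of_injective hinj).elim _ _⟩
end
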